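/- Let N ≥ 2 and let w : Fin N → ℝ be positive weights, and let i₀, i₁ ∈ Fin N be two distinct indices of minimal weight (w(i₀) and w(i₁) are the two smallest values among the w(i)). Then among all depth assignments d : Fin N → ℕ satisfying the Kraft inequality ∑_i 2^{−d(i)} ≤ 1, there exists one minimizing the weighted path length ∑_i w(i)·d(i) in which d(i₀) = d(i₁) and this common value equals the maximum of d over all indices. (This is the exchange lemma underlying the optimality of Huffman's greedy strategy of always merging the two smallest distributions.) -/

import Mathlib

/-!
Take any optimal depth assignment `d`. Its maximal depth is attained at least twice: if a single
leaf were strictly deepest, at depth `D + 1`, then scaling the Kraft inequality by `2 ^ (D + 1)`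
turns it into `1 + E ≤ 2 ^ (D + 1)` with `E` even, hence `E + 2 ≤ 2 ^ (D + 1)`, which says that
lifting that leaf to depth `D` keeps the Kraft inequality while strictly lowering the cost.
Swapping the depths of a lightest leaf and a deepest leaf never increases the cost, so two such
swaps move both lightest leaves to the maximal depth without losing optimality.
-/

open Finset Function Equiv

namespace Huffman

variable {ι : Type*} [Fintype ι]

noncomputable def kraftSum (d : ι → ℕ) : ℝ := ∑ i, (2 : ℝ) ^ (-(d i : ℤ))

noncomputable def weightedLength (w : ι → ℝ) (d : ι → ℕ) : ℝ := ∑ i, w i * d i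

def IsOptimal (w : ι → ℝ) (d : ι → ℕ) : Prop :=
  kraftSum d ≤ 1 ∧ ∀ d' : ι → ℕ, kraftSum d' ≤ 1 → weightedLength w d ≤ weightedLength w d'

lemma kraftSum_mul_two_pow {d : ι → ℕ} {D : ℕ} (hD : ∀ i, d i ≤ D) :
    kraftSum d * 2 ^ D = ((∑ i, 2 ^ (D - d i) : ℕ) : ℝ) := by
  push_cast
  rw [kraftSum, sum_mul]
  refine sum_congr rfl fun i _ => ?_
  rw [← zpow_natCast, ← zpow_natCast _ (D - d i), ← zpow_add₀ two_ne_zero, Nat.cast_sub (hD i)]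
  ring_nf

lemma kraftSum_le_one_iff {d : ι → ℕ} {D : ℕ} (hD : ∀ i, d i ≤ D) :
    kraftSum d ≤ 1 ↔ ∑ i, 2 ^ (D - d i) ≤ 2 ^ D := by
  rw [← mul_le_mul_iff_of_pos_right (pow_pos two_pos D), kraftSum_mul_two_pow hD, one_mul]
  norm_cast

lemma kraftSum_comp_equiv (d : ι → ℕ) (σ : ι ≃ ι) : kraftSum (d ∘ σ) = kraftSum d :=
  σ.sum_comp fun i => (2 : ℝ) ^ (-(d i : ℤ))

lemma kraftSum_update_le_one [DecidableEq ι] {d : ι → ℕ} {k : ι} {D : ℕ}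
    (hK : kraftSum d ≤ 1) (hk : d k = D + 1) (hD : ∀ i ≠ k, d i ≤ D) :
    kraftSum (update d k D) ≤ 1 := by
  have hle : ∀ i, d i ≤ D + 1 := fun i => by
    rcases eq_or_ne i k with rfl | hi
    exacts [hk.le, (hD i hi).trans D.le_succ]
  have hle' : ∀ i, update d k D i ≤ D + 1 := fun i => by
    rcases eq_or_ne i k with rfl | hi
    exacts [by simp, by simpa [hi] using hle i]
  set E := ∑ i ∈ univ.erase k, 2 ^ (D + 1 - d i)
  have hE : Even E := even_sum _ fun i hi =>
    Nat.even_pow.mpr ⟨even_two, by have := hD i (ne_of_mem_erase hi); omega⟩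
  have hpow : Even (2 ^ (D + 1)) := Nat.even_pow.mpr ⟨even_two, D.succ_ne_zero⟩
  rw [kraftSum_le_one_iff hle, ← add_sum_erase _ _ (mem_univ k), hk, Nat.sub_self] at hK
  rw [kraftSum_le_one_iff hle', ← add_sum_erase _ _ (mem_univ k), update_self,
    sum_congr rfl fun i hi => by rw [update_of_ne (ne_of_mem_erase hi)]]
  obtain ⟨m, hm⟩ := hE
  obtain ⟨n, hn⟩ := hpow
  simp only [pow_zero] at hK
  rw [show D + 1 - D = 1 by omega]
  omega

lemma mul_le_weightedLength {w : ι → ℝ} (hw : ∀ i, 0 ≤ w i) (d : ι → ℕ) (i : ι) :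
    w i * d i ≤ weightedLength w d :=
  single_le_sum (f := fun i => w i * d i) (fun j _ => mul_nonneg (hw j) (d j).cast_nonneg)
    (mem_univ i)

lemma weightedLength_strictMono {w : ι → ℝ} (hw : ∀ i, 0 < w i) :
    StrictMono (weightedLength w) := fun d d' h => by
  obtain ⟨hle, i, hi⟩ := Pi.lt_def.mp h
  exact sum_lt_sum (fun j _ => mul_le_mul_of_nonneg_left (by exact_mod_cast hle j) (hw j).le)
    ⟨i, mem_univ i, mul_lt_mul_of_pos_left (by exact_mod_cast hi) (hw i)⟩

lemma weightedLength_comp_swap_le [DecidableEq ι] {w : ι → ℝ} {d : ι → ℕ} {a b : ι}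
    (hw : w a ≤ w b) (hd : d a ≤ d b) : weightedLength w (d ∘ swap a b) ≤ weightedLength w d := by
  rcases eq_or_ne a b with rfl | hab
  · simp
  have hdiff : weightedLength w d - weightedLength w (d ∘ swap a b)
      = (w b - w a) * (d b - d a) := by
    rw [weightedLength, weightedLength, ← sum_sub_distrib,
      Fintype.sum_eq_add a b hab fun i hi => by simp [swap_apply_of_ne_of_ne hi.1 hi.2]]
    simp only [comp_apply, swap_apply_left, swap_apply_right]
    ring
  have : (d a : ℝ) ≤ d b := by exact_mod_cast hd
  nlinarith

variable {w : ι → ℝ} {d : ι → ℕ}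

lemma exists_isOptimal (hw : ∀ i, 0 < w i) : ∃ d, IsOptimal w d := by
  set d₀ : ι → ℕ := fun _ => Fintype.card ι
  have hd₀ : kraftSum d₀ ≤ 1 := by
    rw [kraftSum_le_one_iff (D := Fintype.card ι) fun _ => le_rfl]
    simpa [d₀] using Nat.lt_two_pow_self.le
  set C := weightedLength w d₀
  set s := {d | kraftSum d ≤ 1 ∧ weightedLength w d ≤ C}
  -- an assignment of cost at most `C` has `d i ≤ C / w i`, so only finitely many compete
  have hs : s.Finite := by
    refine (Set.Finite.pi (t := fun i => Set.Iic ⌊C / w i⌋₊) fun _ => Set.finite_Iic _).subset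
      fun d hd i _ => Nat.le_floor ((le_div_iff₀ (hw i)).mpr ?_)
    rw [mul_comm]
    exact (mul_le_weightedLength (fun j => (hw j).le) d i).trans hd.2
  obtain ⟨d, hds, hmin⟩ := s.exists_min_image (weightedLength w) hs ⟨d₀, hd₀, le_rfl⟩
  refine ⟨d, hds.1, fun d' hd' => ?_⟩
  by_cases h : weightedLength w d' ≤ C
  · exact hmin d' ⟨hd', h⟩
  · exact hds.2.trans (not_le.mp h).le

lemma IsOptimal.comp_swap [DecidableEq ι] (hd : IsOptimal w d) {a b : ι} (hw : w a ≤ w b)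
    (hab : d a ≤ d b) : IsOptimal w (d ∘ swap a b) :=
  ⟨(kraftSum_comp_equiv d _).symm ▸ hd.1,
    fun d' hd' => (weightedLength_comp_swap_le hw hab).trans (hd.2 d' hd')⟩

lemma IsOptimal.exists_ne_forall_le [Nontrivial ι] (hd : IsOptimal w d) (hw : ∀ i, 0 < w i)
    (k : ι) : ∃ j ≠ k, ∀ i, d i ≤ d j := by
  classical
  obtain ⟨m, hm⟩ := Finite.exists_max d
  rcases ne_or_eq m k with hmk | rfl
  · exact ⟨m, hmk, hm⟩
  by_contra! h
  have hlt : ∀ j ≠ m, d j < d m := fun j hj =>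
    let ⟨i, hi⟩ := h j hj
    hi.trans_le (hm i)
  obtain ⟨j, hj⟩ := exists_ne m
  obtain ⟨D, hD⟩ := Nat.exists_eq_add_one.mpr (Nat.zero_lt_of_lt (hlt j hj))
  have hK := kraftSum_update_le_one hd.1 hD fun i hi => by
    have := hlt i hi; omega
  refine (hd.2 _ hK).not_gt (weightedLength_strictMono hw ?_)
  exact update_lt_self_iff.mpr (hD ▸ D.lt_succ_self)

lemma IsOptimal.exists_comp_swap [Nontrivial ι] [DecidableEq ι] (hd : IsOptimal w d)
    (hw : ∀ i, 0 < w i) {a b : ι} (hmin : ∀ j, j ≠ a → j ≠ b → w a ≤ w j) :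
    ∃ j ≠ b, (∀ i, d i ≤ d j) ∧ IsOptimal w (d ∘ swap a j) := by
  obtain ⟨j, hjb, hj⟩ := hd.exists_ne_forall_le hw b
  refine ⟨j, hjb, hj, hd.comp_swap ?_ (hj a)⟩
  rcases eq_or_ne j a with rfl | hja
  exacts [le_rfl, hmin j hja hjb]

end Huffman

open Huffman in
theorem huffman_exchange_lemma_general
    (N : ℕ) (w : Fin N → ℝ) (hw : ∀ i, 0 < w i)
    (i₀ i₁ : Fin N) (hne : i₀ ≠ i₁)
    (hmin : ∀ i : Fin N, i ≠ i₀ → i ≠ i₁ → w i₀ ≤ w i ∧ w i₁ ≤ w i) :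
    ∃ d : Fin N → ℕ,
      (∑ i : Fin N, (2 : ℝ) ^ (-(d i : ℤ))) ≤ 1 ∧
      (∀ d' : Fin N → ℕ,
        (∑ i : Fin N, (2 : ℝ) ^ (-(d' i : ℤ))) ≤ 1 →
        (∑ i : Fin N, w i * (d i : ℝ)) ≤ ∑ i : Fin N, w i * (d' i : ℝ)) ∧
      d i₀ = d i₁ ∧ (∀ i : Fin N, d i ≤ d i₀) := by
  have := nontrivial_of_ne i₀ i₁ hne
  obtain ⟨d, hd⟩ := exists_isOptimal hw
  obtain ⟨j, -, hj, hd₁⟩ := hd.exists_comp_swap hw fun i h₀ h₁ => (hmin i h₀ h₁).1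
  obtain ⟨j', hj'i₀, hj', hd₂⟩ := hd₁.exists_comp_swap hw fun i h₁ h₀ => (hmin i h₀ h₁).2
  set d₁ := d ∘ swap i₀ j
  have hfix : swap i₁ j' i₀ = i₀ := swap_apply_of_ne_of_ne hne hj'i₀.symm
  have hdeep : d₁ j' = d₁ i₀ := le_antisymm (by simpa [d₁] using hj _) (hj' i₀)
  refine ⟨d₁ ∘ swap i₁ j', hd₂.1, hd₂.2, by simp [hfix, hdeep], fun i => ?_⟩
  simpa [hfix, hdeep] using hj' (swap i₁ j' i)

/-- Exchange lemma underlying Huffman's greedy strategy: if `i₀ ≠ i₁` are two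
indices of minimal weight among positive weights `w`, then among all depth
assignments satisfying the Kraft inequality there is one minimizing the
weighted path length in which `d(i₀) = d(i₁)` and this common value is the
maximum depth. -/
theorem huffman_exchange_lemma
    (N : ℕ) (hN : 2 ≤ N) (w : Fin N → ℝ) (hw : ∀ i, 0 < w i)
    (i₀ i₁ : Fin N) (hne : i₀ ≠ i₁)
    (hmin : ∀ i : Fin N, i ≠ i₀ → i ≠ i₁ → w i₀ ≤ w i ∧ w i₁ ≤ w i) :
    ∃ d : Fin N → ℕ,
      (∑ i : Fin N, (2 : ℝ) ^ (-(d i : ℤ))) ≤ 1 ∧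
      (∀ d' : Fin N → ℕ,
        (∑ i : Fin N, (2 : ℝ) ^ (-(d' i : ℤ))) ≤ 1 →
        (∑ i : Fin N, w i * (d i : ℝ)) ≤ ∑ i : Fin N, w i * (d' i : ℝ)) ∧
      d i₀ = d i₁ ∧ (∀ i : Fin N, d i ≤ d i₀) :=
  huffman_exchange_lemma_general N w hw i₀ i₁ hne hmin
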